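/- arXiv:1907.06065 — 4 statements merged into one kernel-verified Lean document; each statement's English description precedes it below -/
import Mathlib

section
/- Let X be a measurable space equipped with a σ-finite measure α, and let p, q : X → ℝ≥0 be measurable with ∫ p dα = ∫ q dα = 1; set μ = α.withDensity p and ν = α.withDensity q. Let D : X → ℝ be measurable with 0 < D(x) < 1 for all x. Assume x ↦ log D(x) is μ-integrable, x ↦ log(1 − D(x)) is ν-integrable, x ↦ log(p(x)/(p(x)+q(x))) is μ-integrable, and x ↦ log(q(x)/(p(x)+q(x))) is ν-integrable. Then ∫ log D dμ + ∫ log(1 − D) dν ≤ ∫ log(p/(p+q)) dμ + ∫ log(q/(p+q)) dν. In other words, the discriminator D*(x) = p(x)/(p(x)+q(x)) maximizes the GAN value functional V(D) = E_{x∼μ}[log D(x)] + E_{x∼ν}[log(1 − D(x))] over all discriminators taking values in (0,1). -/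
open MeasureTheory Real
open scoped ENNReal NNReal

private lemma opt_disc_pointwise (a b d : ℝ) (ha : 0 ≤ a) (hb : 0 ≤ b) (hd0 : 0 < d) (hd1 : d < 1) :
    a * log d + b * log (1 - d) ≤ a * log (a / (a + b)) + b * log (b / (a + b)) := by
  rcases ha.eq_or_lt with h | hapos
  · rcases hb.eq_or_lt with h' | hbpos
    · simp [← h, ← h']
    · subst h
      simp only [zero_mul, zero_add, div_self hbpos.ne', log_one, mul_zero]
      exact mul_nonpos_of_nonneg_of_nonpos hb (log_nonpos (by linarith) (by linarith))
  · rcases hb.eq_or_lt with h' | hbpos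
    · subst h'
      simp only [zero_mul, add_zero, div_self hapos.ne', log_one, mul_zero]
      exact mul_nonpos_of_nonneg_of_nonpos ha (log_nonpos hd0.le hd1.le)
    · have hab : 0 < a + b := by linarith
      have h1 : log d - log (a / (a + b)) ≤ d * (a + b) / a - 1 := by
        rw [← log_div hd0.ne' (by positivity)]
        have := log_le_sub_one_of_pos (show 0 < d / (a / (a + b)) by positivity)
        calc log (d / (a / (a + b))) ≤ d / (a / (a+b)) - 1 := this
          _ = d * (a + b) / a - 1 := by rw [div_div_eq_mul_div]
      have h2 : log (1 - d) - log (b / (a + b)) ≤ (1 - d) * (a + b) / b - 1 := by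
        rw [← log_div (by linarith) (by positivity)]
        have := log_le_sub_one_of_pos (show 0 < (1 - d) / (b / (a + b)) by
          apply div_pos (by linarith) (by positivity))
        calc log ((1-d) / (b / (a + b))) ≤ (1-d) / (b / (a+b)) - 1 := this
          _ = (1 - d) * (a + b) / b - 1 := by rw [div_div_eq_mul_div]
      have e1 : a * (d * (a + b) / a - 1) = d * (a + b) - a := by field_simp
      have e2 : b * ((1 - d) * (a + b) / b - 1) = (1 - d) * (a + b) - b := by field_simp
      nlinarith [mul_le_mul_of_nonneg_left h1 ha, mul_le_mul_of_nonneg_left h2 hb]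


/-- **Optimal discriminator (Theorem 1, first half).**
Let `α` be a σ-finite measure, `p q : X → ℝ≥0` measurable densities integrating to one,
`μ = α.withDensity p`, `ν = α.withDensity q`.  For any measurable discriminator
`D : X → ℝ` with values in `(0,1)` (and the stated integrability assumptions),
the GAN value `∫ log D dμ + ∫ log (1 - D) dν` is at most the value obtained by the
optimal discriminator `D* = p / (p + q)`. -/
theorem optimal_discriminator
    {X : Type*} [MeasurableSpace X] (α : Measure X) [SigmaFinite α]
    (p q : X → ℝ≥0) (hp : Measurable p) (hq : Measurable q)
    (hp1 : ∫⁻ x, (p x : ℝ≥0∞) ∂α = 1) (hq1 : ∫⁻ x, (q x : ℝ≥0∞) ∂α = 1)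
    (D : X → ℝ) (hD : Measurable D) (hD0 : ∀ x, 0 < D x) (hD1 : ∀ x, D x < 1)
    (h1 : Integrable (fun x => log (D x)) (α.withDensity fun x => (p x : ℝ≥0∞)))
    (h2 : Integrable (fun x => log (1 - D x)) (α.withDensity fun x => (q x : ℝ≥0∞)))
    (h3 : Integrable (fun x => log ((p x : ℝ) / ((p x : ℝ) + (q x : ℝ))))
      (α.withDensity fun x => (p x : ℝ≥0∞)))
    (h4 : Integrable (fun x => log ((q x : ℝ) / ((p x : ℝ) + (q x : ℝ))))
      (α.withDensity fun x => (q x : ℝ≥0∞))) :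
    (∫ x, log (D x) ∂(α.withDensity fun x => (p x : ℝ≥0∞)))
      + ∫ x, log (1 - D x) ∂(α.withDensity fun x => (q x : ℝ≥0∞)) ≤
    (∫ x, log ((p x : ℝ) / ((p x : ℝ) + (q x : ℝ)))
        ∂(α.withDensity fun x => (p x : ℝ≥0∞)))
      + ∫ x, log ((q x : ℝ) / ((p x : ℝ) + (q x : ℝ)))
        ∂(α.withDensity fun x => (q x : ℝ≥0∞)) := by
  have i1 : Integrable (fun x => (p x : ℝ) * log (D x)) α := by
    simpa [NNReal.smul_def] using (integrable_withDensity_iff_integrable_smul hp).1 h1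
  have i2 : Integrable (fun x => (q x : ℝ) * log (1 - D x)) α := by
    simpa [NNReal.smul_def] using (integrable_withDensity_iff_integrable_smul hq).1 h2
  have i3 : Integrable (fun x => (p x : ℝ) * log ((p x : ℝ) / ((p x : ℝ) + (q x : ℝ)))) α := by
    simpa [NNReal.smul_def] using (integrable_withDensity_iff_integrable_smul hp).1 h3
  have i4 : Integrable (fun x => (q x : ℝ) * log ((q x : ℝ) / ((p x : ℝ) + (q x : ℝ)))) α := by
    simpa [NNReal.smul_def] using (integrable_withDensity_iff_integrable_smul hq).1 h4
  rw [integral_withDensity_eq_integral_smul hp, integral_withDensity_eq_integral_smul hq,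
    integral_withDensity_eq_integral_smul hp, integral_withDensity_eq_integral_smul hq]
  simp only [NNReal.smul_def, smul_eq_mul]
  rw [← integral_add i1 i2, ← integral_add i3 i4]
  refine integral_mono (i1.add i2) (i3.add i4) fun x => ?_
  exact opt_disc_pointwise (p x) (q x) (D x) (p x).coe_nonneg (q x).coe_nonneg (hD0 x) (hD1 x)
end

section
/- Let X be a measurable space equipped with a σ-finite measure α, and let p, q : X → ℝ≥0 be measurable with ∫ p dα = ∫ q dα = 1; set μ = α.withDensity p and ν = α.withDensity q. Let m = (1/2)•μ + (1/2)•ν be the mixture measure. Then μ ≪ m and ν ≪ m, the Kullback–Leibler divergences klDiv(μ‖m) and klDiv(ν‖m) are finite, and, assuming x ↦ log(p(x)/(p(x)+q(x))) is μ-integrable and x ↦ log(q(x)/(p(x)+q(x))) is ν-integrable, the value of the GAN objective at the optimal discriminator D* = p/(p+q) satisfies ∫ log(p/(p+q)) dμ + ∫ log(q/(p+q)) dν = −log 4 + klDiv(μ‖m) + klDiv(ν‖m), where the KL divergences are taken as real numbers (e.g. via .toReal of the extended-nonnegative-real Kullback–Leibler divergence). -/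
/-!
The density of `μ = p α` with respect to the mixture `m = (μ + ν) / 2 = ((p + q) / 2) α` is
`2p / (p + q)`, so `llr μ m = log 2 + log (p / (p + q))` `μ`-a.e. and
`klDiv(μ‖m) = log 2 + ∫ log (p / (p + q)) dμ`; symmetrically for `ν`, and the two `log 2`
add up to `log 4`. Gibbs' inequality is what makes `toReal ∘ ofReal` exact here: it is imported
by identifying `klDiv` with `InformationTheory.klDiv`, whose correction term `ν univ - μ univ`
vanishes between measures of equal mass.
-/

open MeasureTheory Real
open scoped ENNReal NNReal Classical

/-- The Kullback–Leibler divergence between two measures, valued in the extended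
nonnegative reals: it is `∫ llr μ ν dμ` when `μ ≪ ν` and the log-likelihood ratio
`llr μ ν` is `μ`-integrable, and `∞` otherwise. -/
noncomputable def klDiv {X : Type*} [MeasurableSpace X] (μ ν : Measure X) : ℝ≥0∞ :=
  if μ ≪ ν ∧ Integrable (llr μ ν) μ then ENNReal.ofReal (∫ x, llr μ ν x ∂μ) else ⊤

lemma klDiv_eq_informationTheory_klDiv {X : Type*} [MeasurableSpace X] {μ ν : Measure X}
    (h_eq : μ Set.univ = ν Set.univ) : klDiv μ ν = InformationTheory.klDiv μ ν := by
  by_cases h : μ ≪ ν ∧ Integrable (llr μ ν) μ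
  · rw [klDiv, if_pos h, InformationTheory.klDiv_of_ac_of_integrable h.1 h.2, measureReal_def,
      measureReal_def, h_eq, add_sub_cancel_right]
  · rw [klDiv, if_neg h, eq_comm, InformationTheory.klDiv_eq_top_iff]
    exact fun hac hint => h ⟨hac, hint⟩

lemma NNReal.add_div_two_mul_two_mul_div_add (a b : ℝ≥0) :
    (a + b) / 2 * (2 * a / (a + b)) = a := by
  rcases eq_or_ne (a + b) 0 with h | h
  · simp [(add_eq_zero.1 h).1]
  · field_simp

namespace MeasureTheory.Measure

variable {X : Type*} [MeasurableSpace X]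

noncomputable abbrev halfMixture (μ ν : Measure X) : Measure X :=
  ((1 : ℝ≥0∞) / 2) • μ + ((1 : ℝ≥0∞) / 2) • ν

lemma halfMixture_comm (μ ν : Measure X) : halfMixture μ ν = halfMixture ν μ :=
  add_comm _ _

lemma absolutelyContinuous_halfMixture_left (μ ν : Measure X) : μ ≪ halfMixture μ ν :=
  (absolutelyContinuous_smul (by norm_num)).add_right _

instance isProbabilityMeasure_halfMixture (μ ν : Measure X) [IsProbabilityMeasure μ]
    [IsProbabilityMeasure ν] :
    IsProbabilityMeasure (halfMixture μ ν) :=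
  ⟨by simp [ENNReal.inv_two_add_inv_two]⟩

variable {α : Measure X} {p q : X → ℝ≥0}

lemma isProbabilityMeasure_withDensity_coe (hp1 : ∫⁻ x, (p x : ℝ≥0∞) ∂α = 1) :
    IsProbabilityMeasure (α.withDensity fun x => (p x : ℝ≥0∞)) :=
  ⟨by rw [withDensity_apply _ MeasurableSet.univ, restrict_univ, hp1]⟩

lemma halfMixture_withDensity (hp : Measurable p) (hq : Measurable q) :
    halfMixture (α.withDensity fun x => (p x : ℝ≥0∞))
        (α.withDensity fun x => (q x : ℝ≥0∞)) =
      α.withDensity fun x => (((p x + q x) / 2 : ℝ≥0) : ℝ≥0∞) := by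
  rw [halfMixture, ← withDensity_smul _ hp.coe_nnreal_ennreal,
    ← withDensity_smul _ hq.coe_nnreal_ennreal,
    ← withDensity_add_left (hp.coe_nnreal_ennreal.const_smul _)]
  congr 1
  funext x
  simp [ENNReal.coe_div, ENNReal.div_eq_inv_mul, mul_add]

lemma withDensity_eq_halfMixture_withDensity (hp : Measurable p) (hq : Measurable q) :
    α.withDensity (fun x => (p x : ℝ≥0∞)) =
      (halfMixture (α.withDensity fun x => (p x : ℝ≥0∞))
        (α.withDensity fun x => (q x : ℝ≥0∞))).withDensity
        fun x => ((2 * p x / (p x + q x) : ℝ≥0) : ℝ≥0∞) := by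
  rw [halfMixture_withDensity hp hq, ← withDensity_mul _ (by fun_prop) (by fun_prop)]
  congr 1
  funext x
  simp only [Pi.mul_apply, ← ENNReal.coe_mul, NNReal.add_div_two_mul_two_mul_div_add]

lemma rnDeriv_halfMixture_withDensity [SigmaFinite α] (hp : Measurable p)
    (hq : Measurable q) :
    (α.withDensity fun x => (p x : ℝ≥0∞)).rnDeriv
        (halfMixture (α.withDensity fun x => (p x : ℝ≥0∞))
          (α.withDensity fun x => (q x : ℝ≥0∞)))
      =ᵐ[halfMixture (α.withDensity fun x => (p x : ℝ≥0∞))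
          (α.withDensity fun x => (q x : ℝ≥0∞))]
        fun x => ((2 * p x / (p x + q x) : ℝ≥0) : ℝ≥0∞) := by
  have : SigmaFinite (halfMixture (α.withDensity fun x => (p x : ℝ≥0∞))
      (α.withDensity fun x => (q x : ℝ≥0∞))) := by
    rw [halfMixture_withDensity hp hq]
    infer_instance
  have h := rnDeriv_withDensity
    (halfMixture (α.withDensity fun x => (p x : ℝ≥0∞))
      (α.withDensity fun x => (q x : ℝ≥0∞)))
    (f := fun x => ((2 * p x / (p x + q x) : ℝ≥0) : ℝ≥0∞)) (by fun_prop)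
  rwa [← withDensity_eq_halfMixture_withDensity hp hq] at h

end MeasureTheory.Measure

section HalfMixture

open Measure

variable {X : Type*} [MeasurableSpace X] {α : Measure X} {p q : X → ℝ≥0}

lemma llr_halfMixture_withDensity_ae_eq [SigmaFinite α] (hp : Measurable p)
    (hq : Measurable q) :
    llr (α.withDensity fun x => (p x : ℝ≥0∞))
        (halfMixture (α.withDensity fun x => (p x : ℝ≥0∞))
          (α.withDensity fun x => (q x : ℝ≥0∞)))
      =ᵐ[α.withDensity fun x => (p x : ℝ≥0∞)]
        fun x => log 2 + log ((p x : ℝ) / ((p x : ℝ) + (q x : ℝ))) := by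
  have h_pos : ∀ᵐ x ∂(α.withDensity fun x => (p x : ℝ≥0∞)), p x ≠ 0 :=
    (ae_withDensity_iff hp.coe_nnreal_ennreal).2 (ae_of_all _ fun x hx => by simpa using hx)
  filter_upwards [(absolutelyContinuous_halfMixture_left _ _).ae_eq
    (rnDeriv_halfMixture_withDensity hp hq), h_pos] with x h_rnDeriv hpx
  rw [llr, h_rnDeriv, ENNReal.coe_toReal, NNReal.coe_div, NNReal.coe_mul, NNReal.coe_add,
    NNReal.coe_ofNat, mul_div_assoc, log_mul two_ne_zero (by positivity)]

lemma toReal_klDiv_halfMixture_withDensity [SigmaFinite α] (hp : Measurable p)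
    (hq : Measurable q) (hp1 : ∫⁻ x, (p x : ℝ≥0∞) ∂α = 1)
    (hq1 : ∫⁻ x, (q x : ℝ≥0∞) ∂α = 1)
    (h_int : Integrable (fun x => log ((p x : ℝ) / ((p x : ℝ) + (q x : ℝ))))
      (α.withDensity fun x => (p x : ℝ≥0∞))) :
    klDiv (α.withDensity fun x => (p x : ℝ≥0∞))
        (halfMixture (α.withDensity fun x => (p x : ℝ≥0∞))
          (α.withDensity fun x => (q x : ℝ≥0∞))) ≠ ⊤ ∧
      (klDiv (α.withDensity fun x => (p x : ℝ≥0∞))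
        (halfMixture (α.withDensity fun x => (p x : ℝ≥0∞))
          (α.withDensity fun x => (q x : ℝ≥0∞)))).toReal =
        log 2 + ∫ x, log ((p x : ℝ) / ((p x : ℝ) + (q x : ℝ)))
          ∂(α.withDensity fun x => (p x : ℝ≥0∞)) := by
  have := isProbabilityMeasure_withDensity_coe hp1
  have := isProbabilityMeasure_withDensity_coe hq1
  have h_ac := absolutelyContinuous_halfMixture_left (α.withDensity fun x => (p x : ℝ≥0∞))
    (α.withDensity fun x => (q x : ℝ≥0∞))
  have h_llr := llr_halfMixture_withDensity_ae_eq (α := α) hp hq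
  have h_univ : (α.withDensity fun x => (p x : ℝ≥0∞)) Set.univ =
      halfMixture (α.withDensity fun x => (p x : ℝ≥0∞))
        (α.withDensity fun x => (q x : ℝ≥0∞)) Set.univ := by
    simp only [measure_univ]
  rw [klDiv_eq_informationTheory_klDiv h_univ]
  refine ⟨InformationTheory.klDiv_ne_top h_ac ((integrable_congr h_llr).2 ?_), ?_⟩
  · exact (integrable_const _).add h_int
  · rw [InformationTheory.toReal_klDiv_of_measure_eq h_ac h_univ, integral_congr_ae h_llr,
      integral_add (integrable_const _) h_int, integral_const, probReal_univ, one_smul]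

end HalfMixture

/-- **Value of the GAN objective at the optimal discriminator (Theorem 1, key identity).**
With `μ = α.withDensity p`, `ν = α.withDensity q` probability measures and
`m = (1/2)•μ + (1/2)•ν` their mixture: `μ ≪ m`, `ν ≪ m`, both KL divergences
`klDiv μ m` and `klDiv ν m` are finite, and the GAN objective evaluated at the
optimal discriminator `D* = p/(p+q)` equals `−log 4 + klDiv(μ‖m) + klDiv(ν‖m)`. -/
theorem gan_value_at_optimal_discriminator
    {X : Type*} [MeasurableSpace X] (α : Measure X) [SigmaFinite α]
    (p q : X → ℝ≥0) (hp : Measurable p) (hq : Measurable q)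
    (hp1 : ∫⁻ x, (p x : ℝ≥0∞) ∂α = 1) (hq1 : ∫⁻ x, (q x : ℝ≥0∞) ∂α = 1)
    (h3 : Integrable (fun x => log ((p x : ℝ) / ((p x : ℝ) + (q x : ℝ))))
      (α.withDensity fun x => (p x : ℝ≥0∞)))
    (h4 : Integrable (fun x => log ((q x : ℝ) / ((p x : ℝ) + (q x : ℝ))))
      (α.withDensity fun x => (q x : ℝ≥0∞))) :
    let μ : Measure X := α.withDensity fun x => (p x : ℝ≥0∞)
    let ν : Measure X := α.withDensity fun x => (q x : ℝ≥0∞)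
    let m : Measure X := ((1 : ℝ≥0∞) / 2) • μ + ((1 : ℝ≥0∞) / 2) • ν
    μ ≪ m ∧ ν ≪ m ∧ klDiv μ m ≠ ⊤ ∧ klDiv ν m ≠ ⊤ ∧
      (∫ x, log ((p x : ℝ) / ((p x : ℝ) + (q x : ℝ))) ∂μ)
          + ∫ x, log ((q x : ℝ) / ((p x : ℝ) + (q x : ℝ))) ∂ν =
        -log 4 + (klDiv μ m).toReal + (klDiv ν m).toReal := by
  intro μ ν m
  have h_comm : Measure.halfMixture ν μ = m := Measure.halfMixture_comm ν μ
  have h_swap : (fun x => log ((q x : ℝ) / ((q x : ℝ) + (p x : ℝ)))) =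
      fun x => log ((q x : ℝ) / ((p x : ℝ) + (q x : ℝ))) := by
    simp only [add_comm]
  obtain ⟨hμ_top, hμ_kl⟩ := toReal_klDiv_halfMixture_withDensity hp hq hp1 hq1 h3
  obtain ⟨hν_top, hν_kl⟩ := toReal_klDiv_halfMixture_withDensity hq hp hq1 hp1 (h_swap ▸ h4)
  rw [h_comm, h_swap] at hν_kl
  rw [h_comm] at hν_top
  refine ⟨Measure.absolutelyContinuous_halfMixture_left μ ν,
    h_comm ▸ Measure.absolutelyContinuous_halfMixture_left ν μ, hμ_top, hν_top, ?_⟩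
  rw [hμ_kl, hν_kl, show (4 : ℝ) = 2 ^ 2 by norm_num, log_pow]
  push_cast
  ring
end

section
/- Let X be a measurable space equipped with a σ-finite measure α, and let p, q : X → ℝ≥0 be measurable with ∫ p dα = ∫ q dα = 1; set μ = α.withDensity p and ν = α.withDensity q. Assume x ↦ log(p(x)/(p(x)+q(x))) is μ-integrable and x ↦ log(q(x)/(p(x)+q(x))) is ν-integrable. Then ∫ log(p/(p+q)) dμ + ∫ log(q/(p+q)) dν ≥ −log 4, and equality holds if and only if μ = ν. -/
open MeasureTheory Real
open scoped ENNReal NNReal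
open InformationTheory

/-!
With `m = (a + b) / 2`, the pointwise integrand `jensenShannonTerm a b` of `2 · JS(μ ‖ ν)` equals
`m · (klFun (a / m) + klFun (b / m))`, where `klFun x = x log x + 1 - x` is nonnegative and vanishes
only at `1`. So it is nonnegative and vanishes exactly when `a = b`. Integrating against `α`, the
densities `p` and `q` turn it into the GAN objective plus `log 4`, which is therefore at least
`-log 4`, with equality iff `p = q` `α`-a.e., i.e. iff `μ = ν`.
-/

noncomputable def jensenShannonTerm (a b : ℝ) : ℝ :=
  a * log (a / (a + b)) + b * log (b / (a + b)) + (a + b) * log 2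

lemma mul_log_div_eq_sub (x : ℝ) {y : ℝ} (hy : y ≠ 0) :
    x * log (x / y) = x * log x - x * log y := by
  rcases eq_or_ne x 0 with rfl | hx
  · simp
  · rw [log_div hx hy]; ring

lemma mul_klFun_div {x m : ℝ} (hm : m ≠ 0) :
    m * klFun (x / m) = x * log (x / m) + m - x := by
  rw [klFun_apply]
  field_simp

lemma jensenShannonTerm_eq_mul_klFun {a b : ℝ} (hab : a + b ≠ 0) :
    jensenShannonTerm a b = (a + b) / 2 *
      (klFun (a / ((a + b) / 2)) + klFun (b / ((a + b) / 2))) := by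
  have hm : (a + b) / 2 ≠ 0 := by positivity
  have hlog : log ((a + b) / 2) = log (a + b) - log 2 := log_div hab two_ne_zero
  rw [mul_add, mul_klFun_div hm, mul_klFun_div hm, jensenShannonTerm, mul_log_div_eq_sub a hab,
    mul_log_div_eq_sub b hab, mul_log_div_eq_sub a hm, mul_log_div_eq_sub b hm, hlog]
  ring

lemma jensenShannonTerm_nonneg {a b : ℝ} (ha : 0 ≤ a) (hb : 0 ≤ b) :
    0 ≤ jensenShannonTerm a b := by
  rcases (add_nonneg ha hb).eq_or_lt with hab | hab
  · obtain ⟨rfl, rfl⟩ : a = 0 ∧ b = 0 := ⟨by linarith, by linarith⟩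
    simp [jensenShannonTerm]
  · rw [jensenShannonTerm_eq_mul_klFun hab.ne']
    have hm : 0 < (a + b) / 2 := by positivity
    exact mul_nonneg hm.le (add_nonneg (klFun_nonneg (by positivity))
      (klFun_nonneg (by positivity)))

lemma jensenShannonTerm_eq_zero_iff {a b : ℝ} (ha : 0 ≤ a) (hb : 0 ≤ b) :
    jensenShannonTerm a b = 0 ↔ a = b := by
  rcases (add_nonneg ha hb).eq_or_lt with hab | hab
  · obtain ⟨rfl, rfl⟩ : a = 0 ∧ b = 0 := ⟨by linarith, by linarith⟩
    simp [jensenShannonTerm]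
  have hm : 0 < (a + b) / 2 := by positivity
  have hka := klFun_nonneg (div_nonneg ha hm.le)
  have hkb := klFun_nonneg (div_nonneg hb hm.le)
  rw [jensenShannonTerm_eq_mul_klFun hab.ne', mul_eq_zero_iff_left hm.ne',
    add_eq_zero_iff_of_nonneg hka hkb, klFun_eq_zero_iff (div_nonneg ha hm.le),
    klFun_eq_zero_iff (div_nonneg hb hm.le), div_eq_one_iff_eq hm.ne',
    div_eq_one_iff_eq hm.ne']
  constructor
  · rintro ⟨h₁, -⟩; linarith
  · rintro rfl; constructor <;> ring

namespace MeasureTheory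

variable {X : Type*} [MeasurableSpace X] {α : Measure X} {f : X → ℝ≥0}

lemma integral_withDensity_coe_nnreal (hf : Measurable f) (g : X → ℝ) :
    ∫ x, g x ∂(α.withDensity fun x => (f x : ℝ≥0∞)) = ∫ x, f x * g x ∂α := by
  simp only [integral_withDensity_eq_integral_smul hf, NNReal.smul_def, smul_eq_mul]

lemma Integrable.coe_nnreal_mul_of_withDensity (hf : Measurable f) {g : X → ℝ}
    (hg : Integrable g (α.withDensity fun x => (f x : ℝ≥0∞))) :
    Integrable (fun x => f x * g x) α := by
  simpa only [NNReal.smul_def, smul_eq_mul] using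
    (integrable_withDensity_iff_integrable_smul hf).mp hg

lemma isProbabilityMeasure_withDensity_coe (hf1 : ∫⁻ x, (f x : ℝ≥0∞) ∂α = 1) :
    IsProbabilityMeasure (α.withDensity fun x => (f x : ℝ≥0∞)) :=
  ⟨by rw [withDensity_apply _ MeasurableSet.univ, Measure.restrict_univ, hf1]⟩

-- The density is the integrand `1` seen through `withDensity`.
lemma integrable_coe_of_lintegral_eq_one (hf : Measurable f) (hf1 : ∫⁻ x, (f x : ℝ≥0∞) ∂α = 1) :
    Integrable (fun x => (f x : ℝ)) α := by
  have := isProbabilityMeasure_withDensity_coe hf1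
  simpa using (integrable_const (1 : ℝ)).coe_nnreal_mul_of_withDensity hf

lemma integral_coe_of_lintegral_eq_one (hf : Measurable f) (hf1 : ∫⁻ x, (f x : ℝ≥0∞) ∂α = 1) :
    ∫ x, (f x : ℝ) ∂α = 1 := by
  have := isProbabilityMeasure_withDensity_coe hf1
  simpa using (integral_withDensity_coe_nnreal (α := α) hf fun _ => (1 : ℝ)).symm

lemma withDensity_coe_eq_iff [SigmaFinite α] (hf : Measurable f) {g : X → ℝ≥0}
    (hg : Measurable g) :
    α.withDensity (fun x => (f x : ℝ≥0∞)) = α.withDensity (fun x => (g x : ℝ≥0∞)) ↔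
      f =ᵐ[α] g := by
  rw [withDensity_eq_iff_of_sigmaFinite hf.coe_nnreal_ennreal.aemeasurable
    hg.coe_nnreal_ennreal.aemeasurable]
  simp only [Filter.EventuallyEq, ENNReal.coe_inj]

end MeasureTheory

section GanObjective

variable {X : Type*} [MeasurableSpace X] {α : Measure X} {p q : X → ℝ≥0}

lemma integrable_jensenShannonTerm (hp : Measurable p) (hq : Measurable q)
    (hp1 : ∫⁻ x, (p x : ℝ≥0∞) ∂α = 1) (hq1 : ∫⁻ x, (q x : ℝ≥0∞) ∂α = 1)
    (hμ : Integrable (fun x => log ((p x : ℝ) / ((p x : ℝ) + (q x : ℝ))))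
      (α.withDensity fun x => (p x : ℝ≥0∞)))
    (hν : Integrable (fun x => log ((q x : ℝ) / ((p x : ℝ) + (q x : ℝ))))
      (α.withDensity fun x => (q x : ℝ≥0∞))) :
    Integrable (fun x => jensenShannonTerm (p x) (q x)) α :=
  ((hμ.coe_nnreal_mul_of_withDensity hp).add (hν.coe_nnreal_mul_of_withDensity hq)).add
    (((integrable_coe_of_lintegral_eq_one hp hp1).add
      (integrable_coe_of_lintegral_eq_one hq hq1)).mul_const (log 2))

lemma integral_jensenShannonTerm (hp : Measurable p) (hq : Measurable q)
    (hp1 : ∫⁻ x, (p x : ℝ≥0∞) ∂α = 1) (hq1 : ∫⁻ x, (q x : ℝ≥0∞) ∂α = 1)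
    (hμ : Integrable (fun x => log ((p x : ℝ) / ((p x : ℝ) + (q x : ℝ))))
      (α.withDensity fun x => (p x : ℝ≥0∞)))
    (hν : Integrable (fun x => log ((q x : ℝ) / ((p x : ℝ) + (q x : ℝ))))
      (α.withDensity fun x => (q x : ℝ≥0∞))) :
    ∫ x, jensenShannonTerm (p x) (q x) ∂α =
      (∫ x, log ((p x : ℝ) / ((p x : ℝ) + (q x : ℝ))) ∂(α.withDensity fun x => (p x : ℝ≥0∞)))
        + (∫ x, log ((q x : ℝ) / ((p x : ℝ) + (q x : ℝ)))
          ∂(α.withDensity fun x => (q x : ℝ≥0∞))) + log 4 := by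
  have hIp := integrable_coe_of_lintegral_eq_one hp hp1
  have hIq := integrable_coe_of_lintegral_eq_one hq hq1
  have hlog4 : log 4 = 2 * log 2 := by
    rw [show (4 : ℝ) = 2 ^ 2 by norm_num, log_pow, Nat.cast_ofNat]
  have hpf := hμ.coe_nnreal_mul_of_withDensity hp
  have hqf := hν.coe_nnreal_mul_of_withDensity hq
  simp only [jensenShannonTerm]
  rw [integral_add (by exact hpf.add hqf) (by exact (hIp.add hIq).mul_const _),
    integral_add hpf hqf, integral_mul_const, integral_add hIp hIq, integral_coe_of_lintegral_eq_one hp hp1,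
    integral_coe_of_lintegral_eq_one hq hq1, integral_withDensity_coe_nnreal hp,
    integral_withDensity_coe_nnreal hq, hlog4]
  ring

end GanObjective

/-- **Global optimality (Theorem 1, second half).**
With `μ = α.withDensity p` and `ν = α.withDensity q` probability measures, the value of
the GAN objective at the optimal discriminator `D* = p/(p+q)` is at least `−log 4`, and
equality holds if and only if `μ = ν`, i.e. the labeled and unlabeled low-level feature
distributions coincide. -/
theorem gan_global_optimality
    {X : Type*} [MeasurableSpace X] (α : Measure X) [SigmaFinite α]
    (p q : X → ℝ≥0) (hp : Measurable p) (hq : Measurable q)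
    (hp1 : ∫⁻ x, (p x : ℝ≥0∞) ∂α = 1) (hq1 : ∫⁻ x, (q x : ℝ≥0∞) ∂α = 1)
    (h3 : Integrable (fun x => log ((p x : ℝ) / ((p x : ℝ) + (q x : ℝ))))
      (α.withDensity fun x => (p x : ℝ≥0∞)))
    (h4 : Integrable (fun x => log ((q x : ℝ) / ((p x : ℝ) + (q x : ℝ))))
      (α.withDensity fun x => (q x : ℝ≥0∞))) :
    (-log 4 ≤
      (∫ x, log ((p x : ℝ) / ((p x : ℝ) + (q x : ℝ)))
          ∂(α.withDensity fun x => (p x : ℝ≥0∞)))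
        + ∫ x, log ((q x : ℝ) / ((p x : ℝ) + (q x : ℝ)))
          ∂(α.withDensity fun x => (q x : ℝ≥0∞))) ∧
    ((∫ x, log ((p x : ℝ) / ((p x : ℝ) + (q x : ℝ)))
          ∂(α.withDensity fun x => (p x : ℝ≥0∞)))
        + (∫ x, log ((q x : ℝ) / ((p x : ℝ) + (q x : ℝ)))
          ∂(α.withDensity fun x => (q x : ℝ≥0∞))) = -log 4 ↔
      (α.withDensity fun x => (p x : ℝ≥0∞)) = (α.withDensity fun x => (q x : ℝ≥0∞))) := by
  have hJ := integral_jensenShannonTerm hp hq hp1 hq1 h3 h4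
  have hint := integrable_jensenShannonTerm hp hq hp1 hq1 h3 h4
  have hnonneg : 0 ≤ fun x => jensenShannonTerm (p x) (q x) := fun x =>
    jensenShannonTerm_nonneg (p x).coe_nonneg (q x).coe_nonneg
  refine ⟨by linarith [integral_nonneg (μ := α) hnonneg], ?_⟩
  rw [withDensity_coe_eq_iff hp hq]
  calc _ ↔ ∫ x, jensenShannonTerm (p x) (q x) ∂α = 0 := by constructor <;> intro <;> linarith
    _ ↔ (fun x => jensenShannonTerm (p x) (q x)) =ᵐ[α] 0 :=
      integral_eq_zero_iff_of_nonneg hnonneg hint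
    _ ↔ p =ᵐ[α] q := by
      refine Filter.eventually_congr (Filter.Eventually.of_forall fun x => ?_)
      rw [Pi.zero_apply, jensenShannonTerm_eq_zero_iff (p x).coe_nonneg (q x).coe_nonneg,
        NNReal.coe_inj]
end

section
/- Let X be a measurable space, P a probability measure on X, N ≥ 1, and F a countable nonempty set of measurable functions f : X → ℝ with 0 ≤ f(x) ≤ 1 for all f ∈ F and x ∈ X. Then the expected uniform deviation satisfies the symmetrization bound: E_{x∼P^{⊗N}} [ sup_{f ∈ F} ( E_P[f] − (1/N)·Σ_{i=1}^N f(x_i) ) ] ≤ (2/N) · E_{x∼P^{⊗N}} E_σ [ sup_{f ∈ F} Σ_{i=1}^N σ_i f(x_i) ], where σ = (σ₁,…,σ_N) is uniform on {−1,+1}^N and independent of x. -/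
open MeasureTheory Real
open scoped ENNReal NNReal

/-!
Introduce a ghost sample `x'` with the same distribution: `E_P f - (1/N) Σ f(xᵢ)` is the
expectation over `x'` of `(1/N) Σ (f(x'ᵢ) - f(xᵢ))`, and a supremum of expectations is at most the
expectation of the supremum. Exchanging `xᵢ` and `x'ᵢ` preserves the product measure, so inserting
arbitrary signs `σᵢ` does not change the expectation of `sup_f Σ (f(x'ᵢ) - f(xᵢ))`; averaging over
all `σ` and bounding the supremum of a sum by the sum of the suprema splits it into two Rademacher
complexities, one for each sample.
-/

section Bounded

variable {κ : Type*} {g : κ → ℝ} {C : ℝ}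

lemma bddAbove_range_of_abs_le (h : ∀ k, |g k| ≤ C) : BddAbove (Set.range g) :=
  ⟨C, by rintro _ ⟨k, rfl⟩; exact (abs_le.1 (h k)).2⟩

lemma abs_ciSup_le [Nonempty κ] (h : ∀ k, |g k| ≤ C) : |⨆ k, g k| ≤ C := by
  obtain ⟨k⟩ := ‹Nonempty κ›
  refine abs_le.2 ⟨(abs_le.1 (h k)).1.trans ?_, ciSup_le fun k => (abs_le.1 (h k)).2⟩
  exact le_ciSup (bddAbove_range_of_abs_le h) k

lemma abs_sub_le_two_mul {a b : ℝ} (ha : |a| ≤ C) (hb : |b| ≤ C) : |a - b| ≤ 2 * C := by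
  linarith [abs_sub a b]

lemma abs_inv_card_mul_sum_le {ι : Type*} [Fintype ι] [Nonempty ι] {g : ι → ℝ}
    (h : ∀ i, |g i| ≤ C) : |(Fintype.card ι : ℝ)⁻¹ * ∑ i, g i| ≤ C := by
  have hcard : (0 : ℝ) < Fintype.card ι := by exact_mod_cast Fintype.card_pos
  rw [abs_mul, abs_inv, Nat.abs_cast, inv_mul_le_iff₀ hcard]
  calc |∑ i, g i| ≤ ∑ i, |g i| := Finset.abs_sum_le_sum_abs _ _
    _ ≤ Fintype.card ι * C := by
        simpa using Finset.sum_le_card_nsmul Finset.univ _ C fun i _ => h i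

end Bounded

lemma sSup_setOf_exists_mem_eq {α : Type*} (F : Set α) (g : α → ℝ) :
    sSup {r : ℝ | ∃ f ∈ F, r = g f} = ⨆ f : F, g f := by
  rw [iSup, ← Set.image_eq_range]
  congr 1
  ext r
  simp [eq_comm]

def rademacherSign (b : Bool) : ℝ := if b then 1 else -1

lemma rademacherSign_not (b : Bool) : rademacherSign (!b) = -rademacherSign b := by
  cases b <;> simp [rademacherSign]

lemma abs_sum_rademacherSign_mul_le {ι : Type*} [Fintype ι] (σ : ι → Bool) {g : ι → ℝ} {B : ℝ}
    (h : ∀ i, |g i| ≤ B) : |∑ i, rademacherSign (σ i) * g i| ≤ Fintype.card ι * B := by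
  have hsign : ∀ i, |rademacherSign (σ i) * g i| ≤ B := fun i => by
    cases σ i <;> simpa [rademacherSign] using h i
  calc |∑ i, rademacherSign (σ i) * g i| ≤ ∑ i, |rademacherSign (σ i) * g i| :=
        Finset.abs_sum_le_sum_abs _ _
    _ ≤ Fintype.card ι * B := by
        simpa using Finset.sum_le_card_nsmul Finset.univ _ B fun i _ => hsign i

def swapWhereFalse {ι X : Type*} (σ : ι → Bool) (p : (ι → X) × (ι → X)) : (ι → X) × (ι → X) :=
  (fun i => if σ i then p.1 i else p.2 i, fun i => if σ i then p.2 i else p.1 i)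

lemma measurePreserving_swapWhereFalse {ι X : Type*} [Fintype ι] [MeasurableSpace X]
    (P : Measure X) [SigmaFinite P] (σ : ι → Bool) :
    MeasurePreserving (swapWhereFalse σ) ((Measure.pi fun _ => P).prod (Measure.pi fun _ => P))
      ((Measure.pi fun _ => P).prod (Measure.pi fun _ => P)) := by
  let e := MeasurableEquiv.arrowProdEquivProdArrow X X ι
  have he := measurePreserving_arrowProdEquivProdArrow X X ι (fun _ => P) (fun _ => P)
  have hswap : ∀ i, MeasurePreserving (fun z : X × X => if σ i then z else z.swap)
      (P.prod P) (P.prod P) := fun i => by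
    cases σ i
    · exact Measure.measurePreserving_swap
    · exact .id _
  have hfac : swapWhereFalse σ = e ∘ (fun z i => if σ i then z i else (z i).swap) ∘ e.symm := by
    ext p i <;> by_cases h : σ i <;>
      simp [swapWhereFalse, e, h, MeasurableEquiv.arrowProdEquivProdArrow,
        Equiv.arrowProdEquivProdArrow]
  rw [hfac]
  exact he.comp ((measurePreserving_pi _ _ hswap).comp he.symm)

lemma integral_sub_empiricalMean_eq {X ι : Type*} [MeasurableSpace X] [Fintype ι] [Nonempty ι]
    (P : Measure X) [IsProbabilityMeasure P] {g : X → ℝ} (hg : Integrable g P) (x : ι → X) :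
    ∫ y, g y ∂P - (Fintype.card ι : ℝ)⁻¹ * ∑ i, g (x i)
      = (Fintype.card ι : ℝ)⁻¹ * ∫ x', ∑ i, (g (x' i) - g (x i)) ∂(Measure.pi fun _ => P) := by
  have hint : ∀ i, Integrable (fun x' : ι → X => g (x' i)) (Measure.pi fun _ => P) :=
    fun i => integrable_comp_eval hg
  have hint_sub : ∀ i,
      Integrable (fun x' : ι → X => g (x' i) - g (x i)) (Measure.pi fun _ => P) :=
    fun i => (hint i).sub (integrable_const _)
  have hmarg : ∀ i, ∫ x' : ι → X, g (x' i) ∂(Measure.pi fun _ => P) = ∫ y, g y ∂P :=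
    fun i => integral_comp_eval (μ := fun _ => P) hg.aestronglyMeasurable
  rw [integral_finsetSum _ fun i _ => hint_sub i]
  simp only [integral_sub (hint _) (integrable_const _), hmarg, integral_const, probReal_univ,
    one_smul, Finset.sum_sub_distrib, Finset.sum_const, Finset.card_univ, nsmul_eq_mul]
  field_simp

section Symmetrization

variable {X ι κ : Type*} [Fintype ι] (f : κ → X → ℝ)

noncomputable def rademacherSup (σ : ι → Bool) (x : ι → X) : ℝ :=
  ⨆ k, ∑ i, rademacherSign (σ i) * f k (x i)

noncomputable def symmetrizedSup (σ : ι → Bool) (p : (ι → X) × (ι → X)) : ℝ :=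
  ⨆ k, ∑ i, rademacherSign (σ i) * (f k (p.2 i) - f k (p.1 i))

variable {f} {C : ℝ}

lemma symmetrizedSup_swapWhereFalse (σ : ι → Bool) (p : (ι → X) × (ι → X)) :
    symmetrizedSup f (fun _ => true) (swapWhereFalse σ p) = symmetrizedSup f σ p := by
  unfold symmetrizedSup
  congr! 3 with k i
  by_cases h : σ i <;> simp [swapWhereFalse, rademacherSign, h]

lemma le_rademacherSup (hC : ∀ k x, |f k x| ≤ C) (σ : ι → Bool) (x : ι → X) (k : κ) :
    ∑ i, rademacherSign (σ i) * f k (x i) ≤ rademacherSup f σ x :=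
  le_ciSup (bddAbove_range_of_abs_le fun k =>
    abs_sum_rademacherSign_mul_le σ fun i => hC k (x i)) k

lemma le_symmetrizedSup (hC : ∀ k x, |f k x| ≤ C) (σ : ι → Bool) (p : (ι → X) × (ι → X))
    (k : κ) : ∑ i, rademacherSign (σ i) * (f k (p.2 i) - f k (p.1 i)) ≤ symmetrizedSup f σ p :=
  le_ciSup (bddAbove_range_of_abs_le fun k => abs_sum_rademacherSign_mul_le σ fun i =>
    abs_sub_le_two_mul (hC k (p.2 i)) (hC k (p.1 i))) k

section Nonempty

variable [Nonempty κ]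

lemma abs_rademacherSup_le (hC : ∀ k x, |f k x| ≤ C) (σ : ι → Bool) (x : ι → X) :
    |rademacherSup f σ x| ≤ Fintype.card ι * C :=
  abs_ciSup_le fun k => abs_sum_rademacherSign_mul_le σ fun i => hC k (x i)

lemma abs_symmetrizedSup_le (hC : ∀ k x, |f k x| ≤ C) (σ : ι → Bool) (p : (ι → X) × (ι → X)) :
    |symmetrizedSup f σ p| ≤ Fintype.card ι * (2 * C) :=
  abs_ciSup_le fun k => abs_sum_rademacherSign_mul_le σ fun i =>
    abs_sub_le_two_mul (hC k (p.2 i)) (hC k (p.1 i))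

lemma symmetrizedSup_le (hC : ∀ k x, |f k x| ≤ C) (σ : ι → Bool) (p : (ι → X) × (ι → X)) :
    symmetrizedSup f σ p ≤ rademacherSup f σ p.2 + rademacherSup f (fun i => !σ i) p.1 := by
  refine ciSup_le fun k => ?_
  have hsplit : ∑ i, rademacherSign (σ i) * (f k (p.2 i) - f k (p.1 i))
      = ∑ i, rademacherSign (σ i) * f k (p.2 i) + ∑ i, rademacherSign (!σ i) * f k (p.1 i) := by
    simp only [rademacherSign_not, ← Finset.sum_add_distrib]
    congr! 1 with i
    ring
  rw [hsplit]
  exact add_le_add (le_rademacherSup hC _ _ k) (le_rademacherSup hC _ _ k)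

end Nonempty

variable [MeasurableSpace X] [Countable κ]

lemma measurable_rademacherSup (hf : ∀ k, Measurable (f k)) (σ : ι → Bool) :
    Measurable (rademacherSup f σ) :=
  .iSup fun k => Finset.measurable_sum _ fun i _ =>
    measurable_const.mul ((hf k).comp (measurable_pi_apply i))

lemma measurable_symmetrizedSup (hf : ∀ k, Measurable (f k)) (σ : ι → Bool) :
    Measurable (symmetrizedSup f σ) :=
  .iSup fun k => Finset.measurable_sum _ fun i _ => measurable_const.mul
    (((hf k).comp ((measurable_pi_apply i).comp measurable_snd)).sub
      ((hf k).comp ((measurable_pi_apply i).comp measurable_fst)))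

variable (P : Measure X) [IsProbabilityMeasure P]

local notation "μ" => Measure.pi fun _ : ι => P

lemma integral_symmetrizedSup_eq (hf : ∀ k, Measurable (f k)) (σ : ι → Bool) :
    ∫ p, symmetrizedSup f σ p ∂(μ).prod μ
      = ∫ p, symmetrizedSup f (fun _ => true) p ∂(μ).prod μ := by
  have hswap := measurePreserving_swapWhereFalse (ι := ι) P σ
  calc ∫ p, symmetrizedSup f σ p ∂(μ).prod μ
      = ∫ p, symmetrizedSup f (fun _ => true) (swapWhereFalse σ p) ∂(μ).prod μ := by
        simp only [symmetrizedSup_swapWhereFalse]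
    _ = ∫ p, symmetrizedSup f (fun _ => true) p ∂((μ).prod μ).map (swapWhereFalse σ) :=
        (integral_map hswap.measurable.aemeasurable
          (measurable_symmetrizedSup hf _).aestronglyMeasurable).symm
    _ = _ := by rw [hswap.map_eq]

variable [Nonempty κ]

lemma integrable_rademacherSup (hf : ∀ k, Measurable (f k)) (hC : ∀ k x, |f k x| ≤ C)
    (σ : ι → Bool) : Integrable (rademacherSup f σ) μ :=
  .of_bound (measurable_rademacherSup hf σ).aestronglyMeasurable _
    (.of_forall (abs_rademacherSup_le hC σ))

lemma integrable_symmetrizedSup (hf : ∀ k, Measurable (f k)) (hC : ∀ k x, |f k x| ≤ C)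
    (σ : ι → Bool) : Integrable (symmetrizedSup f σ) ((μ).prod μ) :=
  .of_bound (measurable_symmetrizedSup hf σ).aestronglyMeasurable _
    (.of_forall (abs_symmetrizedSup_le hC σ))

lemma integrable_iSup_integral_sub_empiricalMean [Nonempty ι] (hf : ∀ k, Measurable (f k))
    (hC : ∀ k x, |f k x| ≤ C) :
    Integrable (fun x : ι → X => ⨆ k, (∫ y, f k y ∂P - (Fintype.card ι : ℝ)⁻¹ * ∑ i, f k (x i)))
      μ := by
  have hmean : ∀ k, |∫ y, f k y ∂P| ≤ C := fun k => by
    simpa using norm_integral_le_of_norm_le_const (.of_forall (hC k) : ∀ᵐ y ∂P, ‖f k y‖ ≤ C)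
  refine .of_bound (Measurable.iSup fun k => measurable_const.sub (measurable_const.mul
    (Finset.measurable_sum _ fun i _ => (hf k).comp (measurable_pi_apply i)))).aestronglyMeasurable
    (2 * C) (.of_forall fun x => abs_ciSup_le fun k => ?_)
  exact abs_sub_le_two_mul (hmean k) (abs_inv_card_mul_sum_le fun i => hC k (x i))

lemma iSup_integral_sub_empiricalMean_le [Nonempty ι] (hf : ∀ k, Measurable (f k))
    (hC : ∀ k x, |f k x| ≤ C) (x : ι → X) :
    ⨆ k, (∫ y, f k y ∂P - (Fintype.card ι : ℝ)⁻¹ * ∑ i, f k (x i))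
      ≤ (Fintype.card ι : ℝ)⁻¹ * ∫ x', symmetrizedSup f (fun _ => true) (x, x') ∂μ := by
  refine ciSup_le fun k => ?_
  have hint : Integrable (f k) P := .of_bound (hf k).aestronglyMeasurable C (.of_forall (hC k))
  rw [integral_sub_empiricalMean_eq P hint]
  refine mul_le_mul_of_nonneg_left (integral_mono ?_ ?_ fun x' => ?_) (by positivity)
  · exact integrable_finsetSum _ fun i _ => (integrable_comp_eval hint).sub (integrable_const _)
  · exact .of_bound ((measurable_symmetrizedSup hf _).comp measurable_prodMk_left).aestronglyMeasurable
      _ (.of_forall fun x' => abs_symmetrizedSup_le hC _ _)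
  · simpa [rademacherSign] using le_symmetrizedSup hC (fun _ => true) (x, x') k

lemma integral_symmetrizedSup_le [DecidableEq ι] (hf : ∀ k, Measurable (f k))
    (hC : ∀ k x, |f k x| ≤ C) :
    2 ^ Fintype.card ι * ∫ p, symmetrizedSup f (fun _ => true) p ∂(μ).prod μ
      ≤ 2 * ∑ σ : ι → Bool, ∫ x, rademacherSup f σ x ∂μ := by
  have hR := integrable_rademacherSup (ι := ι) P hf hC
  have hnot : ∑ σ : ι → Bool, ∫ x, rademacherSup f (fun i => !σ i) x ∂μ
      = ∑ σ : ι → Bool, ∫ x, rademacherSup f σ x ∂μ :=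
    Fintype.sum_bijective (fun σ i => !σ i)
      (Function.Involutive.bijective fun σ => by simp) _ _ fun σ => rfl
  calc 2 ^ Fintype.card ι * ∫ p, symmetrizedSup f (fun _ => true) p ∂(μ).prod μ
      = ∑ σ : ι → Bool, ∫ p, symmetrizedSup f σ p ∂(μ).prod μ := by
        simp [integral_symmetrizedSup_eq P hf]
    _ ≤ ∑ σ : ι → Bool, ∫ p, (rademacherSup f σ p.2 + rademacherSup f (fun i => !σ i) p.1)
          ∂(μ).prod μ :=
        Finset.sum_le_sum fun σ _ => integral_mono (integrable_symmetrizedSup P hf hC σ)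
          (((hR σ).comp_snd μ).add ((hR _).comp_fst μ)) (symmetrizedSup_le hC σ)
    _ = ∑ σ : ι → Bool, (∫ x, rademacherSup f σ x ∂μ
          + ∫ x, rademacherSup f (fun i => !σ i) x ∂μ) := by
        refine Finset.sum_congr rfl fun σ _ => ?_
        rw [integral_add ((hR σ).comp_snd μ) ((hR _).comp_fst μ), integral_fun_snd,
          integral_fun_fst]
        simp
    _ = 2 * ∑ σ : ι → Bool, ∫ x, rademacherSup f σ x ∂μ := by
        rw [Finset.sum_add_distrib, hnot, two_mul]

theorem integral_iSup_integral_sub_empiricalMean_le [Nonempty ι] [DecidableEq ι]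
    (hf : ∀ k, Measurable (f k)) (hC : ∀ k x, |f k x| ≤ C) :
    ∫ x, ⨆ k, (∫ y, f k y ∂P - (Fintype.card ι : ℝ)⁻¹ * ∑ i, f k (x i)) ∂μ
      ≤ 2 / Fintype.card ι *
          ∫ x, (∑ σ : ι → Bool, rademacherSup f σ x) / 2 ^ Fintype.card ι ∂μ := by
  have hG := integrable_symmetrizedSup P hf hC (fun _ : ι => true)
  calc ∫ x, ⨆ k, (∫ y, f k y ∂P - (Fintype.card ι : ℝ)⁻¹ * ∑ i, f k (x i)) ∂μ
      ≤ ∫ x, (Fintype.card ι : ℝ)⁻¹ * ∫ x', symmetrizedSup f (fun _ => true) (x, x') ∂μ ∂μ :=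
        integral_mono (integrable_iSup_integral_sub_empiricalMean P hf hC)
          (hG.integral_prod_left.const_mul _) (iSup_integral_sub_empiricalMean_le P hf hC)
    _ = (Fintype.card ι : ℝ)⁻¹ * ∫ p, symmetrizedSup f (fun _ => true) p ∂(μ).prod μ := by
        rw [integral_const_mul, integral_prod _ hG]
    _ ≤ (Fintype.card ι : ℝ)⁻¹ *
          (2 * (∑ σ : ι → Bool, ∫ x, rademacherSup f σ x ∂μ) / 2 ^ Fintype.card ι) := by
        gcongr
        rw [le_div_iff₀ (by positivity), mul_comm]
        exact integral_symmetrizedSup_le P hf hC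
    _ = _ := by
        rw [integral_div, integral_finsetSum _ fun σ _ => integrable_rademacherSup P hf hC σ]
        ring

end Symmetrization

/-- **Symmetrization lemma.**
For a probability measure `P`, a countable nonempty class `F` of measurable functions
with values in `[0,1]`, the expected uniform deviation between population risk `E_P[f]`
and empirical risk `(1/N)·Σᵢ f(xᵢ)` over an i.i.d. sample `x ∼ P^{⊗N}` is at most
`2/N` times the Rademacher complexity
`E_{x ∼ P^{⊗N}} E_σ [sup_{f ∈ F} Σᵢ σᵢ f(xᵢ)]`, where the expectation over the
independent uniform signs `σ ∈ {−1,+1}^N` is written as the average over all `2^N`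
sign patterns. -/
theorem symmetrization
    {X : Type*} [MeasurableSpace X] (P : Measure X) [IsProbabilityMeasure P]
    {N : ℕ} (hN : 1 ≤ N)
    (F : Set (X → ℝ)) (hFc : F.Countable) (hFne : F.Nonempty)
    (hFmeas : ∀ f ∈ F, Measurable f)
    (hFbdd : ∀ f ∈ F, ∀ x, f x ∈ Set.Icc (0 : ℝ) 1) :
    ∫ x : Fin N → X,
        sSup {r : ℝ | ∃ f ∈ F, r = (∫ y, f y ∂P) - (1 / (N : ℝ)) * ∑ i, f (x i)}
        ∂(Measure.pi fun _ => P)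
      ≤ (2 / (N : ℝ)) *
        ∫ x : Fin N → X,
          (∑ σ : Fin N → Bool,
            sSup {r : ℝ | ∃ f ∈ F, r = ∑ i, (if σ i then (1 : ℝ) else -1) * f (x i)})
            / 2 ^ N
          ∂(Measure.pi fun _ => P) := by
  have : Countable F := hFc.to_subtype
  have : Nonempty F := hFne.to_subtype
  have : Nonempty (Fin N) := ⟨⟨0, hN⟩⟩
  have hC : ∀ (f : F) x, |(f : X → ℝ) x| ≤ 1 := fun f x =>
    abs_le.2 ⟨by linarith [(hFbdd f f.2 x).1], (hFbdd f f.2 x).2⟩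
  have key := integral_iSup_integral_sub_empiricalMean_le (ι := Fin N) P
    (f := fun f : F => (f : X → ℝ))
    (fun f => hFmeas f f.2) hC
  simp only [Fintype.card_fin, ← one_div] at key
  simp only [sSup_setOf_exists_mem_eq]
  exact key
end
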